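/- arXiv:2106.14721 — 3 statements merged into one kernel-verified Lean document; each statement's English description precedes it below -/
import Mathlib

section
/- The generator drift inequality for V(ν) = ‖ν‖: if f ≥ f_min > 0 and Λ > 0, then for any finite positive measure ν, the quantity L V(ν) := -ν[f] + [ν[f] + Λ(1-‖ν‖)]_+ satisfies L V(ν) ≤ Λ - (min(f_min, Λ)) ‖ν‖. Consequently, there exist constants K* > 0, d > 0, c > 0 with L V(ν) ≤ d·1_{‖ν‖≤K*} - c(1 + ‖ν‖) for all ν. -/
open Real MeasureTheory Set

/-- Total mass of a measure on ℝ, as a real number. -/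
noncomputable def mass (ν : Measure ℝ) : ℝ := (ν Set.univ).toReal

/-- The generator applied to V(ν) = ‖ν‖. -/
noncomputable def LV (f : ℝ → ℝ) (Λ : ℝ) (ν : Measure ℝ) : ℝ :=
  -(∫ u, f u ∂ν) + max ((∫ u, f u ∂ν) + Λ * (1 - mass ν)) 0

/-!
When the positive part in `LV` vanishes, `LV = -ν[f] ≤ -f_min ‖ν‖`; otherwise the `ν[f]` terms
cancel and `LV = Λ (1 - ‖ν‖)`. Either way `LV ≤ Λ - min(f_min, Λ) ‖ν‖`. A drift that is linear in
`‖ν‖` with negative slope `-κ` beats `-(κ/2) (1 + ‖ν‖)` outside a bounded set of masses, and on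
that set it is bounded above by a constant.
-/

lemma mass_nonneg (ν : Measure ℝ) : 0 ≤ mass ν := ENNReal.toReal_nonneg

lemma mul_mass_le_integral {ν : Measure ℝ} [IsFiniteMeasure ν] {f : ℝ → ℝ} {a : ℝ}
    (hf : Integrable f ν) (hlow : ∀ u, a ≤ f u) : a * mass ν ≤ ∫ u, f u ∂ν := by
  calc a * mass ν = ∫ _, a ∂ν := by rw [integral_const, smul_eq_mul, mul_comm]; rfl
    _ ≤ ∫ u, f u ∂ν := integral_mono (integrable_const a) hf hlow

lemma LV_le_of_mul_mass_le_integral {f : ℝ → ℝ} {fmin Λ : ℝ} {ν : Measure ℝ} (hΛ : 0 ≤ Λ)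
    (hI : fmin * mass ν ≤ ∫ u, f u ∂ν) : LV f Λ ν ≤ Λ - min fmin Λ * mass ν := by
  have hm := mass_nonneg ν
  have hmin_fmin : min fmin Λ * mass ν ≤ fmin * mass ν :=
    mul_le_mul_of_nonneg_right (min_le_left _ _) hm
  have hmin_Λ : min fmin Λ * mass ν ≤ Λ * mass ν :=
    mul_le_mul_of_nonneg_right (min_le_right _ _) hm
  unfold LV
  rcases le_total ((∫ u, f u ∂ν) + Λ * (1 - mass ν)) 0 with h | h
  · rw [max_eq_right h]; linarith
  · rw [max_eq_left h]; linarith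

lemma exists_indicator_drift_bound {a κ : ℝ} (ha : 0 ≤ a) (hκ : 0 < κ) :
    ∃ K d c : ℝ, 0 < K ∧ 0 < d ∧ 0 < c ∧
      ∀ m : ℝ, 0 ≤ m → a - κ * m ≤ (if m ≤ K then d else 0) - c * (1 + m) := by
  refine ⟨2 * a / κ + 1, a + κ / 2, κ / 2, by positivity, by positivity, by positivity, ?_⟩
  intro m hm
  split_ifs with hmK
  · linarith [mul_nonneg hκ.le hm]
  · have hκm : 2 * a + κ < κ * m := by
      rw [not_le, div_add_one hκ.ne', div_lt_iff₀ hκ] at hmK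
      linarith
    linarith

/-- Foster–Lyapunov drift inequality for V(ν) = ‖ν‖. -/
theorem foster_lyapunov (f : ℝ → ℝ) (fmin B Λ : ℝ)
    (hfmin : 0 < fmin) (hlow : ∀ u, fmin ≤ f u) (hup : ∀ u, f u ≤ B)
    (hmeas : Measurable f) (hΛ : 0 < Λ) :
    (∀ ν : Measure ℝ, IsFiniteMeasure ν →
      LV f Λ ν ≤ Λ - min fmin Λ * mass ν) ∧
    (∃ K d c : ℝ, 0 < K ∧ 0 < d ∧ 0 < c ∧
      ∀ ν : Measure ℝ, IsFiniteMeasure ν →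
        LV f Λ ν ≤ (if mass ν ≤ K then d else 0) - c * (1 + mass ν)) := by
  have hlinear : ∀ ν : Measure ℝ, IsFiniteMeasure ν → LV f Λ ν ≤ Λ - min fmin Λ * mass ν := by
    intro ν _
    have hint : Integrable f ν :=
      .of_mem_Icc fmin B hmeas.aemeasurable (.of_forall fun u => ⟨hlow u, hup u⟩)
    exact LV_le_of_mul_mass_le_integral hΛ.le (mul_mass_le_integral hint hlow)
  obtain ⟨K, d, c, hK, hd, hc, hbound⟩ := exists_indicator_drift_bound hΛ.le (lt_min hfmin hΛ)
  exact ⟨hlinear, K, d, c, hK, hd, hc, fun ν hν =>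
    (hlinear ν hν).trans (hbound _ (mass_nonneg ν))⟩
end

section
/- Conservation of mass for the deterministic integral equation: suppose A : [0,T] → ℝ is continuous and satisfies A(t) = H^A(t) + ∫_0^t λ^A(t|s) S^A(t|s) A(s) ds for all t ∈ [0,T], where S^A(t|s) = exp(-∫_s^t λ^A(r|s) dr) and H^A, H̃^A are defined as in the paper with H^A(t) = -d/dt H̃^A(t). Then the normalization M(t) := H̃^A(t) + ∫_0^t S^A(t|s) A(s) ds is constant in t; in particular if H̃^A(0) = 1 then M(t) = 1 for all t ∈ [0,T]. -/
/-!
Integrating `∂ₜ S(t|s) = -λ(t|s) S(t|s)` from `S(s|s) = 1` gives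
`S(t|s) = 1 - ∫_s^t λ(r|s) S(r|s) dr`. Substituting this into `∫_0^t S(t|s) A(s) ds` and
exchanging the order of integration over the triangle `0 ≤ s ≤ r ≤ t`, the integral equation
turns the correction term into `∫_0^t (A - H)`, so
`∫_0^t S(t|s) A(s) ds = ∫_0^t H = H̃(0) - H̃(t)`.
-/

open Real MeasureTheory intervalIntegral Set

section
variable {E : Type*} [NormedAddCommGroup E] [NormedSpace ℝ E]

theorem continuous_parametric_intervalIntegral_of_continuous_bounds {X : Type*}
    [TopologicalSpace X] {f : X → ℝ → E} (hf : Continuous f.uncurry) {a b : X → ℝ}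
    (ha : Continuous a) (hb : Continuous b) :
    Continuous fun x => ∫ t in a x..b x, f x t := by
  have hsplit : (fun x => ∫ t in a x..b x, f x t)
      = fun x => (∫ t in (0:ℝ)..b x, f x t) - ∫ t in (0:ℝ)..a x, f x t := by
    funext x
    have hfx : Continuous (f x) := hf.uncurry_left x
    exact (integral_interval_sub_left (hfx.intervalIntegrable _ _)
      (hfx.intervalIntegrable _ _)).symm
  rw [hsplit]
  exact (continuous_parametric_intervalIntegral_of_continuous hf hb).sub
    (continuous_parametric_intervalIntegral_of_continuous hf ha)

theorem intervalIntegral_triangle_swap [CompleteSpace E] {g : ℝ → ℝ → E}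
    (hg : Continuous g.uncurry) {a b : ℝ} (hab : a ≤ b) :
    ∫ s in a..b, ∫ r in s..b, g r s = ∫ r in a..b, ∫ s in a..r, g r s := by
  -- With the strict triangle the `r`-sections are exactly `Ioc s b`; the `s`-sections differ
  -- from `Iic r` only at the point `r`.
  set F : ℝ → ℝ → E := fun r s => {p : ℝ × ℝ | p.2 < p.1}.indicator g.uncurry (r, s)
  have hF : IntegrableOn F.uncurry (uIoc a b ×ˢ uIoc a b) :=
    ((hg.continuousOn.integrableOn_compact (isCompact_Icc.prod isCompact_Icc)).indicator
      (measurableSet_lt measurable_snd measurable_fst)).mono_set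
      (prod_mono uIoc_subset_uIcc uIoc_subset_uIcc)
  have inner_r : ∀ s ∈ uIcc a b, ∫ r in a..b, F r s = ∫ r in s..b, g r s := by
    intro s hs
    rw [uIcc_of_le hab] at hs
    calc ∫ r in a..b, F r s = ∫ r in Ioc a b, (Ioi s).indicator (g · s) r := by
          rw [integral_of_le hab]; rfl
      _ = ∫ r in s..b, g r s := by
          rw [setIntegral_indicator measurableSet_Ioi, Ioc_inter_Ioi, sup_eq_right.mpr hs.1,
            integral_of_le hs.2]
  have inner_s : ∀ r ∈ uIcc a b, ∫ s in a..b, F r s = ∫ s in a..r, g r s := by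
    intro r hr
    rw [uIcc_of_le hab] at hr
    calc ∫ s in a..b, F r s = ∫ s in a..b, (Iio r).indicator (g r) s := rfl
      _ = ∫ s in a..b, (Iic r).indicator (g r) s :=
          integral_congr_ae ((indicator_ae_eq_of_ae_eq_set Iio_ae_eq_Iic).mono fun _ h _ => h)
      _ = ∫ s in a..r, g r s := integral_indicator hr
  calc ∫ s in a..b, ∫ r in s..b, g r s = ∫ s in a..b, ∫ r in a..b, F r s :=
        integral_congr fun s hs => (inner_r s hs).symm
    _ = ∫ r in a..b, ∫ s in a..b, F r s := (intervalIntegral_intervalIntegral_swap hF).symm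
    _ = ∫ r in a..b, ∫ s in a..r, g r s := integral_congr inner_s
end

noncomputable def survival (lam : ℝ → ℝ → ℝ) (t s : ℝ) : ℝ :=
  exp (-∫ r in s..t, lam r s)

theorem continuous_survival {lam : ℝ → ℝ → ℝ} (hlam : Continuous lam.uncurry) :
    Continuous (survival lam).uncurry :=
  continuous_exp.comp (continuous_parametric_intervalIntegral_of_continuous_bounds
    (f := fun (p : ℝ × ℝ) u => lam u p.2)
    (hlam.comp (continuous_snd.prodMk continuous_fst.snd)) continuous_snd continuous_fst).neg

theorem survival_eq_one_sub_integral {lam : ℝ → ℝ → ℝ} (hlam : Continuous lam.uncurry)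
    (t s : ℝ) : survival lam t s = 1 - ∫ r in s..t, lam r s * survival lam r s := by
  have hlam_s : Continuous (lam · s) := hlam.uncurry_right s
  have hderiv : ∀ r, HasDerivAt (survival lam · s) (-(lam r s * survival lam r s)) r := by
    intro r
    have hexponent : HasDerivAt (fun x => -∫ u in s..x, lam u s) (-lam r s) r :=
      (hlam_s.integral_hasStrictDerivAt s r).hasDerivAt.neg
    simpa [survival, mul_comm] using hexponent.exp
  have hcont : Continuous fun r => lam r s * survival lam r s :=
    hlam_s.mul ((continuous_survival hlam).uncurry_right s)
  have hFTC := integral_eq_sub_of_hasDerivAt (fun r _ => hderiv r)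
    (hcont.neg.intervalIntegrable s t)
  have hss : survival lam s s = 1 := by simp [survival]
  rw [intervalIntegral.integral_neg, hss] at hFTC
  linarith

theorem integral_survival_mul_of_renewal {lam : ℝ → ℝ → ℝ} (hlam : Continuous lam.uncurry)
    {A H : ℝ → ℝ} (hA : Continuous A) (hH : Continuous H) {a t : ℝ} (hat : a ≤ t)
    (hrenewal : ∀ r ∈ Icc a t, A r = H r + ∫ s in a..r, lam r s * survival lam r s * A s) :
    ∫ s in a..t, survival lam t s * A s = ∫ r in a..t, H r := by
  set k : ℝ → ℝ → ℝ := fun r s => lam r s * survival lam r s * A s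
  have hk : Continuous k.uncurry :=
    (hlam.mul (continuous_survival hlam)).mul (hA.comp continuous_snd)
  have hk_tail : Continuous fun s => ∫ r in s..t, k r s :=
    continuous_parametric_intervalIntegral_of_continuous_bounds
      (f := fun s r => k r s) (hk.comp continuous_swap) continuous_id continuous_const
  calc ∫ s in a..t, survival lam t s * A s
      = ∫ s in a..t, (A s - ∫ r in s..t, k r s) := by
        refine integral_congr fun s _ => ?_
        simp only [k, intervalIntegral.integral_mul_const, survival_eq_one_sub_integral hlam t s]
        ring
    _ = (∫ s in a..t, A s) - ∫ r in a..t, ∫ s in a..r, k r s := by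
        rw [intervalIntegral.integral_sub (hA.intervalIntegrable a t)
          (hk_tail.intervalIntegrable a t), intervalIntegral_triangle_swap hk hat]
    _ = (∫ s in a..t, A s) - ∫ r in a..t, (A r - H r) := by
        congr 1
        refine integral_congr fun r hr => ?_
        rw [uIcc_of_le hat] at hr
        exact eq_sub_of_add_eq' (hrenewal r hr).symm
    _ = ∫ r in a..t, H r := by
        rw [intervalIntegral.integral_sub (hA.intervalIntegrable a t)
          (hH.intervalIntegrable a t)]
        ring

theorem mass_conservation_general (T : ℝ)
    (lam : ℝ → ℝ → ℝ) (hlam : Continuous fun p : ℝ × ℝ => lam p.1 p.2)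
    (H Htilde A : ℝ → ℝ) (hH : Continuous H) (hA : Continuous A)
    (hderiv : ∀ t ∈ Set.Icc 0 T, HasDerivAt Htilde (-H t) t)
    (heq : ∀ t ∈ Set.Icc 0 T,
      A t = H t + ∫ s in (0:ℝ)..t,
        lam t s * Real.exp (-(∫ r in s..t, lam r s)) * A s) :
    (∀ t ∈ Set.Icc 0 T,
      (Htilde t + ∫ s in (0:ℝ)..t, Real.exp (-(∫ r in s..t, lam r s)) * A s)
        = Htilde 0) ∧
    (Htilde 0 = 1 → ∀ t ∈ Set.Icc 0 T,
      (Htilde t + ∫ s in (0:ℝ)..t, Real.exp (-(∫ r in s..t, lam r s)) * A s) = 1) := by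
  have hmass : ∀ t ∈ Icc 0 T,
      Htilde t + ∫ s in (0:ℝ)..t, survival lam t s * A s = Htilde 0 := by
    rintro t ⟨ht0, htT⟩
    have hsub : Icc 0 t ⊆ Icc 0 T := Icc_subset_Icc_right htT
    have hHtilde : ∫ r in (0:ℝ)..t, -H r = Htilde t - Htilde 0 :=
      integral_eq_sub_of_hasDerivAt (fun r hr => hderiv r (hsub (uIcc_of_le ht0 ▸ hr)))
        (hH.neg.intervalIntegrable 0 t)
    rw [integral_survival_mul_of_renewal hlam hA hH ht0 fun r hr => heq r (hsub hr)]
    rw [intervalIntegral.integral_neg] at hHtilde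
    linarith
  exact ⟨hmass, fun h1 t ht => (hmass t ht).trans h1⟩

/-- Conservation of mass for the deterministic integral equation.
`lam t s` is the hazard rate λ^A(t|s) (continuous in both variables),
`S t s = exp(-∫_s^t lam r s dr)` the survival, `Htilde` and `H` are as in the paper
with `(Htilde)' = -H`, and `A` solves the integral equation on `[0,T]`.
Then `M t = Htilde t + ∫_0^t S t s · A s ds` is constant. -/
theorem mass_conservation (T : ℝ) (hT : 0 ≤ T)
    (lam : ℝ → ℝ → ℝ) (hlam : Continuous fun p : ℝ × ℝ => lam p.1 p.2)
    (H Htilde A : ℝ → ℝ) (hH : Continuous H) (hA : Continuous A)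
    (hderiv : ∀ t ∈ Set.Icc 0 T, HasDerivAt Htilde (-H t) t)
    (heq : ∀ t ∈ Set.Icc 0 T,
      A t = H t + ∫ s in (0:ℝ)..t,
        lam t s * Real.exp (-(∫ r in s..t, lam r s)) * A s) :
    (∀ t ∈ Set.Icc 0 T,
      (Htilde t + ∫ s in (0:ℝ)..t, Real.exp (-(∫ r in s..t, lam r s)) * A s)
        = Htilde 0) ∧
    (Htilde 0 = 1 → ∀ t ∈ Set.Icc 0 T,
      (Htilde t + ∫ s in (0:ℝ)..t, Real.exp (-(∫ r in s..t, lam r s)) * A s) = 1) :=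
  mass_conservation_general T lam hlam H Htilde A hH hA hderiv heq
end

section
/- Increment bound for the transported intensity: suppose f is differentiable with bounded derivative and |u f'(u)| ≤ C for all u. Let Φ^0 be the flow of du/dt = (μ-u)/τ. Then there is a constant C' (depending on C, ‖f‖_∞, ‖f'‖_∞, μ, τ) such that for all u ∈ ℝ and all 0 ≤ σ ≤ σ₀, |f(Φ^0_{0,σ}(u)) - f(u)| ≤ C' (1 - e^{-σ/τ}). -/
open Real

/-- The flow of du/dt = (μ - u)/τ with constant drive μ, run for time σ. -/
noncomputable def flow0σ (τ μ : ℝ) (σ u : ℝ) : ℝ :=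
  u * Real.exp (-σ / τ) + μ * (1 - Real.exp (-σ / τ))

/-- Increment bound for the transported intensity under the assumptions
`‖f‖_∞ < ∞`, `‖f'‖_∞ < ∞` and `|u f'(u)| ≤ C`. -/
theorem transported_intensity_increment_bound
    (τ μ : ℝ) (hτ : 0 < τ) (σ₀ : ℝ) (hσ₀ : 0 < σ₀)
    (f : ℝ → ℝ) (hdiff : Differentiable ℝ f)
    (B B' C : ℝ) (hB : ∀ u, |f u| ≤ B) (hB' : ∀ u, |deriv f u| ≤ B')
    (hC : ∀ u, |u * deriv f u| ≤ C) :
    ∃ C' : ℝ, ∀ u : ℝ, ∀ σ : ℝ, 0 ≤ σ → σ ≤ σ₀ →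
      |f (flow0σ τ μ σ u) - f u| ≤ C' * (1 - Real.exp (-σ / τ)) := by
  have hC0 : 0 ≤ C := by have := hC 0; simpa using this
  have hB'0 : 0 ≤ B' := le_trans (abs_nonneg _) (hB' 0)
  refine ⟨(C + |μ| * B') * Real.exp (σ₀ / τ), fun u σ hσ0 hσσ₀ => ?_⟩
  set e : ℝ := Real.exp (-σ / τ) with he
  set e₀ : ℝ := Real.exp (-σ₀ / τ) with he₀
  have hepos : 0 < e := Real.exp_pos _
  have he₀pos : 0 < e₀ := Real.exp_pos _
  have he1 : e ≤ 1 := by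
    rw [he]
    exact Real.exp_le_one_iff.mpr (div_nonpos_of_nonpos_of_nonneg (by linarith) hτ.le)
  have he₀e : e₀ ≤ e := by
    rw [he, he₀]
    exact Real.exp_le_exp.mpr ((div_le_div_iff_of_pos_right hτ).mpr (by linarith))
  have he₀inv : e₀⁻¹ = Real.exp (σ₀ / τ) := by
    rw [he₀, ← Real.exp_neg, neg_div, neg_neg]
  by_cases huμ : u = μ
  · have : flow0σ τ μ σ u = u := by
      simp [flow0σ, huμ]; ring
    rw [this]
    simp only [sub_self, abs_zero]
    have h1 : 0 ≤ 1 - e := by linarith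
    positivity
  · -- main case
    set v : ℝ := flow0σ τ μ σ u with hv
    have hvu : v - u = (1 - e) * (μ - u) := by rw [hv]; simp [flow0σ]; ring
    have habsuμ : 0 < |u - μ| := abs_pos.mpr (sub_ne_zero.mpr huμ)
    set M : ℝ := (C + |μ| * B') / (e₀ * |u - μ|) with hM
    have hseg : ∀ ξ ∈ segment ℝ u v, |deriv f ξ| ≤ M := by
      intro ξ hξ
      obtain ⟨a, b, ha, hb, hab, hξ⟩ := hξ
      have hξval : ξ = (a + b * e) * u + b * (1 - e) * μ := by
        rw [← hξ, hv]; simp [flow0σ, smul_eq_mul]; ring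
      have hξμ : ξ - μ = (a + b * e) * (u - μ) := by
        rw [hξval]; linear_combination μ * hab
      have habe : e₀ ≤ a + b * e := by nlinarith
      have hlow : e₀ * |u - μ| ≤ |ξ - μ| := by
        rw [hξμ, abs_mul]
        have : |a + b * e| = a + b * e := abs_of_nonneg (by nlinarith)
        rw [this]
        exact mul_le_mul_of_nonneg_right habe (abs_nonneg _)
      have key : |deriv f ξ| * |ξ - μ| ≤ C + |μ| * B' := by
        have h1 : |(ξ - μ) * deriv f ξ| ≤ |ξ * deriv f ξ| + |μ * deriv f ξ| := by
          have : (ξ - μ) * deriv f ξ = ξ * deriv f ξ - μ * deriv f ξ := by ring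
          rw [this]; exact abs_sub _ _
        calc |deriv f ξ| * |ξ - μ| = |(ξ - μ) * deriv f ξ| := by
              rw [abs_mul]; ring
          _ ≤ |ξ * deriv f ξ| + |μ * deriv f ξ| := h1
          _ ≤ C + |μ| * B' := by
              have := hC ξ
              have h2 : |μ * deriv f ξ| ≤ |μ| * B' := by
                rw [abs_mul]
                exact mul_le_mul_of_nonneg_left (hB' ξ) (abs_nonneg _)
              linarith
      rw [hM]
      rw [le_div_iff₀ (by positivity)]
      calc |deriv f ξ| * (e₀ * |u - μ|) ≤ |deriv f ξ| * |ξ - μ| :=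
            mul_le_mul_of_nonneg_left hlow (abs_nonneg _)
        _ ≤ C + |μ| * B' := key
    have hmvt : ‖f v - f u‖ ≤ M * ‖v - u‖ :=
      (convex_segment u v).norm_image_sub_le_of_norm_deriv_le
        (fun ξ _ => hdiff ξ) (fun ξ hξ => hseg ξ hξ)
        (left_mem_segment ℝ u v) (right_mem_segment ℝ u v)
    rw [Real.norm_eq_abs, Real.norm_eq_abs, hvu, abs_mul] at hmvt
    have h1e : |1 - e| = 1 - e := abs_of_nonneg (by linarith)
    rw [h1e] at hmvt
    have habsmu : |μ - u| = |u - μ| := abs_sub_comm _ _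
    rw [habsmu] at hmvt
    calc |f v - f u| ≤ M * ((1 - e) * |u - μ|) := hmvt
      _ = (C + |μ| * B') / e₀ * (1 - e) := by
          rw [hM]; field_simp
      _ = (C + |μ| * B') * Real.exp (σ₀ / τ) * (1 - e) := by
          rw [div_eq_mul_inv, he₀inv]
end
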